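/- Let $\overline{U}(X) = \left(-\frac{X}{2}+\left(\frac{1}{27}+\frac{X^2}{4}\right)^{1/2}\right)^{1/3}-\left(\frac{X}{2}+\left(\frac{1}{27}+\frac{X^2}{4}\right)^{1/2}\right)^{1/3}$. Then $\overline{U}$ is differentiable and satisfies the steady self-similar Burgers equation $-\frac{1}{2}\overline{U}(X) + \left(\frac{3}{2}X + \overline{U}(X)\right)\overline{U}'(X) = 0$ for all $X \in \mathbb{R}$. -/

import Mathlib

/-! By Cardano's formula, `Ubar X` is the real root of the depressed cubic `U ^ 3 + U + X = 0`.
Differentiating this identity gives `Ubar' * (3 * Ubar ^ 2 + 1) = -1`, and the self-similar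
equation multiplied by `3 * Ubar ^ 2 + 1` is `-3/2` times the cubic. -/

noncomputable def Ubar (X : ℝ) : ℝ :=
  (-X/2 + Real.sqrt (1/27 + X^2/4)) ^ ((1:ℝ)/3)
    - (X/2 + Real.sqrt (1/27 + X^2/4)) ^ ((1:ℝ)/3)

lemma cube_sub_add_mul_eq_of_three_mul_eq {R : Type*} [CommRing R] {p q c : R}
    (h : 3 * (p * q) = c) : (p - q) ^ 3 + c * (p - q) = p ^ 3 - q ^ 3 := by
  linear_combination (-(p - q)) * h

lemma Real.rpow_one_div_three_pow_three {x : ℝ} (hx : 0 ≤ x) : (x ^ ((1:ℝ)/3)) ^ 3 = x := by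
  simpa [one_div] using Real.rpow_inv_natCast_pow hx three_ne_zero

namespace Ubar

lemma neg_half_add_sqrt_pos (X : ℝ) : 0 < -X/2 + Real.sqrt (1/27 + X^2/4) := by
  linarith [Real.lt_sqrt_of_sq_lt (show (X/2) ^ 2 < 1/27 + X^2/4 by nlinarith)]

lemma half_add_sqrt_pos (X : ℝ) : 0 < X/2 + Real.sqrt (1/27 + X^2/4) := by
  simpa [neg_div] using neg_half_add_sqrt_pos (-X)

lemma radicands_mul (X : ℝ) :
    (-X/2 + Real.sqrt (1/27 + X^2/4)) * (X/2 + Real.sqrt (1/27 + X^2/4)) = 1/27 := by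
  linear_combination Real.sq_sqrt (show (0:ℝ) ≤ 1/27 + X^2/4 by positivity)

lemma cube_roots_mul (X : ℝ) :
    (-X/2 + Real.sqrt (1/27 + X^2/4)) ^ ((1:ℝ)/3)
      * (X/2 + Real.sqrt (1/27 + X^2/4)) ^ ((1:ℝ)/3) = 1/3 := by
  rw [← Real.mul_rpow (neg_half_add_sqrt_pos X).le (half_add_sqrt_pos X).le, radicands_mul,
    show (1/27 : ℝ) = (1/3) ^ 3 by norm_num, show (1:ℝ)/3 = ((3:ℕ):ℝ)⁻¹ by norm_num,
    Real.pow_rpow_inv_natCast (by norm_num) three_ne_zero]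

theorem cube_add_self_add (X : ℝ) : Ubar X ^ 3 + Ubar X + X = 0 := by
  have hcardano := cube_sub_add_mul_eq_of_three_mul_eq
    ((congrArg (3 * ·) (cube_roots_mul X)).trans (by norm_num : (3 : ℝ) * (1/3) = 1))
  rw [Real.rpow_one_div_three_pow_three (neg_half_add_sqrt_pos X).le,
    Real.rpow_one_div_three_pow_three (half_add_sqrt_pos X).le, one_mul] at hcardano
  rw [Ubar, hcardano]
  ring

theorem differentiable : Differentiable ℝ Ubar := fun X => by
  have hsqrt : DifferentiableAt ℝ (fun X : ℝ => Real.sqrt (1/27 + X^2/4)) X :=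
    DifferentiableAt.sqrt (by fun_prop) (by positivity)
  have hneg : DifferentiableAt ℝ (fun X : ℝ => -X/2 + Real.sqrt (1/27 + X^2/4)) X :=
    (by fun_prop : DifferentiableAt ℝ (fun X : ℝ => -X/2) X).add hsqrt
  have hpos : DifferentiableAt ℝ (fun X : ℝ => X/2 + Real.sqrt (1/27 + X^2/4)) X :=
    (by fun_prop : DifferentiableAt ℝ (fun X : ℝ => X/2) X).add hsqrt
  exact (hneg.rpow_const (Or.inl (neg_half_add_sqrt_pos X).ne')).sub
    (hpos.rpow_const (Or.inl (half_add_sqrt_pos X).ne'))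

theorem deriv_mul_three_sq_add_one (X : ℝ) : deriv Ubar X * (3 * Ubar X ^ 2 + 1) = -1 := by
  have hcubic : HasDerivAt (fun X => Ubar X ^ 3 + Ubar X + X)
      (3 * Ubar X ^ 2 * deriv Ubar X + deriv Ubar X + 1) X := by
    have hU := (differentiable X).hasDerivAt
    exact ((hU.pow 3).add hU).add (hasDerivAt_id' X)
  rw [show (fun X => Ubar X ^ 3 + Ubar X + X) = fun _ => 0 from funext cube_add_self_add]
    at hcubic
  linear_combination hcubic.unique (hasDerivAt_const X 0)

end Ubar

theorem stmt_1 :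
    Differentiable ℝ Ubar ∧
      ∀ X : ℝ, -(1/2) * Ubar X + (3/2 * X + Ubar X) * deriv Ubar X = 0 := by
  refine ⟨Ubar.differentiable, fun X => ?_⟩
  have hfactor : 0 < 3 * Ubar X ^ 2 + 1 := by positivity
  refine (mul_left_inj' hfactor.ne').mp ?_
  linear_combination (-3/2 : ℝ) * Ubar.cube_add_self_add X
    + (3/2 * X + Ubar X) * Ubar.deriv_mul_three_sq_add_one X
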